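/- arXiv:2212.00778 — 4 statements merged into one kernel-verified Lean document; each statement's English description precedes it below -/
import Mathlib

section
/- Let S and S' be nonempty multisets of binary-labeled examples whose edit distance (minimum number of single-element insertions and deletions transforming S into S') is at most 1. Then |g(S) − g(S')| < 2 / max(|S|, |S'|), where g denotes the Gini index. -/
open Classical in
/-- The Gini index of a multiset of binary-labeled examples:
`2 p (1-p)` where `p` is the fraction of `true` labels; `0` for the empty multiset. -/
noncomputable def gini {α : Type*} (S : Multiset (α × Bool)) : ℝ :=
  if S = 0 then 0 else
    let p : ℝ := ((S.filter fun e => e.2 = true).card : ℝ) / S.card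
    2 * p * (1 - p)

/-- `EditPath n S S'` holds iff `S'` can be obtained from `S` by a sequence of `n`
single-element insertions and deletions. -/
def EditPath {α : Type*} : ℕ → Multiset α → Multiset α → Prop
  | 0, S, S' => S = S'
  | n + 1, S, S' => ∃ T : Multiset α, ((∃ a, T = a ::ₘ S) ∨ (∃ a, S = a ::ₘ T)) ∧ EditPath n T S'

/-- The edit distance between two multisets: the minimum number of single-element
insertions and deletions transforming one into the other. -/
noncomputable def editDist {α : Type*} (S S' : Multiset α) : ℕ :=
  sInf {n | EditPath n S S'}

/-!
Write `p` for the fraction of `true` labels, so that `gini = 2 p (1 - p)`. One insertion into a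
multiset of size `n` moves `p` by at most `1 / (n + 1)`, and on `[0, 1]` the map `p ↦ 2 p (1 - p)`
changes by `2 |p - q| |1 - p - q|`, where `|1 - p - q| < 1` unless `p = q`.
-/

section GiniSmooth

variable {α : Type*}

theorem abs_two_mul_mul_one_sub_sub_lt {p q δ : ℝ} (hp : p ∈ Set.Icc (0 : ℝ) 1)
    (hq : q ∈ Set.Icc (0 : ℝ) 1) (hpq : |p - q| ≤ δ) (hδ : 0 < δ) :
    |2 * p * (1 - p) - 2 * q * (1 - q)| < 2 * δ := by
  obtain ⟨hp0, hp1⟩ := hp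
  obtain ⟨hq0, hq1⟩ := hq
  rcases eq_or_ne p q with rfl | hne
  · simpa using hδ
  have hsum : |1 - p - q| < 1 := by
    refine abs_lt.2 ⟨?_, ?_⟩ <;> by_contra! <;> exact hne (by linarith)
  calc |2 * p * (1 - p) - 2 * q * (1 - q)| = 2 * |p - q| * |1 - p - q| := by
        rw [← abs_two, ← abs_mul, ← abs_mul]; ring_nf
    _ < 2 * |p - q| * 1 := by gcongr
    _ ≤ 2 * δ := by linarith

theorem abs_add_div_add_one_sub_div_le {k n ε : ℝ} (hk : 0 ≤ k) (hkn : k ≤ n)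
    (hε : 0 ≤ ε) (hε1 : ε ≤ 1) : |(k + ε) / (n + 1) - k / n| ≤ 1 / (n + 1) := by
  rcases (hk.trans hkn).eq_or_lt with rfl | hn
  · obtain rfl : k = 0 := le_antisymm hkn hk
    simp [abs_of_nonneg hε, hε1]
  rw [div_sub_div _ _ (by positivity) hn.ne', abs_div,
    abs_of_pos (by positivity : (0 : ℝ) < (n + 1) * n),
    div_le_div_iff₀ (by positivity) (by positivity)]
  calc |(k + ε) * n - (n + 1) * k| * (n + 1) ≤ n * (n + 1) := by
        gcongr
        exact abs_le.2 ⟨by nlinarith, by nlinarith⟩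
    _ = 1 * ((n + 1) * n) := by ring

/-- Division by zero makes this `0` on the empty multiset, so `gini_eq_trueFrac` needs no
case split. -/
noncomputable def trueFrac (S : Multiset (α × Bool)) : ℝ :=
  ((S.filter fun e => e.2 = true).card : ℝ) / S.card

theorem gini_eq_trueFrac (S : Multiset (α × Bool)) :
    gini S = 2 * trueFrac S * (1 - trueFrac S) := by
  unfold gini trueFrac
  split_ifs with h <;> simp [h]

theorem trueFrac_mem_Icc (S : Multiset (α × Bool)) : trueFrac S ∈ Set.Icc (0 : ℝ) 1 :=
  ⟨by unfold trueFrac; positivity,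
    div_le_one_of_le₀ (by exact_mod_cast Multiset.card_le_card (Multiset.filter_le _ _))
      (Nat.cast_nonneg _)⟩

theorem abs_trueFrac_cons_sub_le (a : α × Bool) (S : Multiset (α × Bool)) :
    |trueFrac (a ::ₘ S) - trueFrac S| ≤ 1 / (a ::ₘ S).card := by
  have hkn : ((S.filter fun e => e.2 = true).card : ℝ) ≤ S.card := by
    exact_mod_cast Multiset.card_le_card (Multiset.filter_le _ _)
  cases ha : a.2
  · simpa [trueFrac, Multiset.filter_cons, ha] using
      abs_add_div_add_one_sub_div_le (Nat.cast_nonneg _) hkn le_rfl zero_le_one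
  · simpa [trueFrac, Multiset.filter_cons, ha] using
      abs_add_div_add_one_sub_div_le (Nat.cast_nonneg _) hkn zero_le_one le_rfl

theorem abs_gini_sub_gini_cons_lt (a : α × Bool) (S : Multiset (α × Bool)) :
    |gini S - gini (a ::ₘ S)| < 2 / (a ::ₘ S).card := by
  rw [gini_eq_trueFrac, gini_eq_trueFrac, abs_sub_comm, ← mul_one_div]
  exact abs_two_mul_mul_one_sub_sub_lt (trueFrac_mem_Icc _) (trueFrac_mem_Icc _)
    (abs_trueFrac_cons_sub_le a S) (one_div_pos.2 (by rw [Multiset.card_cons]; positivity))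

theorem EditPath.trans {m n : ℕ} {S T U : Multiset α}
    (h₁ : EditPath m S T) (h₂ : EditPath n T U) : EditPath (m + n) S U := by
  induction m generalizing S with
  | zero => cases h₁; simpa using h₂
  | succ m ih =>
    obtain ⟨V, hSV, hVT⟩ := h₁
    rw [Nat.succ_add]
    exact ⟨V, hSV, ih hVT⟩

theorem editPath_insert_all (S T : Multiset α) : EditPath T.card S (S + T) := by
  induction T using Multiset.induction generalizing S with
  | empty => simp [EditPath]
  | cons a T ih =>
    rw [Multiset.card_cons, Multiset.add_cons, ← Multiset.cons_add]
    exact ⟨a ::ₘ S, Or.inl ⟨a, rfl⟩, ih _⟩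

theorem editPath_delete_all (S T : Multiset α) : EditPath S.card (S + T) T := by
  induction S using Multiset.induction with
  | empty => simp [EditPath]
  | cons a S ih =>
    rw [Multiset.card_cons, Multiset.cons_add]
    exact ⟨S + T, Or.inr ⟨a, rfl⟩, ih⟩

theorem editPath_editDist (S T : Multiset α) : EditPath (editDist S T) S T :=
  Nat.sInf_mem (s := {n | EditPath n S T})
    ⟨_, (editPath_insert_all S T).trans (editPath_delete_all S T)⟩

theorem eq_or_cons_of_editDist_le_one {S T : Multiset α} (h : editDist S T ≤ 1) :
    S = T ∨ (∃ a, T = a ::ₘ S) ∨ ∃ a, S = a ::ₘ T := by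
  have hpath := editPath_editDist S T
  rcases Nat.le_one_iff_eq_zero_or_eq_one.mp h with h | h <;> rw [h] at hpath
  · exact Or.inl hpath
  · obtain ⟨U, hSU, rfl : U = T⟩ := hpath
    exact Or.inr hSU

end GiniSmooth

theorem gini_smooth_one_edit_general {α : Type*} (S S' : Multiset (α × Bool))
    (hS : S ≠ 0) (h : editDist S S' ≤ 1) :
    |gini S - gini S'| < 2 / (max S.card S'.card : ℝ) := by
  rcases eq_or_cons_of_editDist_le_one h with rfl | ⟨a, rfl⟩ | ⟨a, rfl⟩
  · simpa [Multiset.card_pos] using hS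
  · rw [max_eq_right (by simp)]
    exact abs_gini_sub_gini_cons_lt a S
  · rw [max_eq_left (by simp), abs_sub_comm]
    exact abs_gini_sub_gini_cons_lt a S'

/-- if nonempty multisets S, S' have edit distance at most 1 then
|g(S) − g(S')| < 2 / max(|S|, |S'|). -/
theorem gini_smooth_one_edit {α : Type*} (S S' : Multiset (α × Bool))
    (hS : S ≠ 0) (hS' : S' ≠ 0) (h : editDist S S' ≤ 1) :
    |gini S - gini S'| < 2 / (max S.card S'.card : ℝ) :=
  gini_smooth_one_edit_general S S' hS h
end

section
/- Let S and S' be finite multisets of binary-labeled examples, and define the relative edit distance Δ*(S,S') = Δ(S,S') / max(|S|,|S'|), where Δ is the (insertion/deletion) edit distance. Then |g(S) − g(S')| ≤ 2.5 · Δ*(S,S'), where g is the Gini index (with g(∅) = 0). -/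
namespace EditPath

variable {α : Type*}

lemma cons (a : α) :
    ∀ {n : ℕ} {S T : Multiset α}, EditPath n S T → EditPath n (a ::ₘ S) (a ::ₘ T)
  | 0, _, _, h => congrArg (a ::ₘ ·) h
  | _ + 1, S, _, ⟨U, hU, hp⟩ => by
    refine ⟨a ::ₘ U, ?_, cons a hp⟩
    rcases hU with ⟨b, rfl⟩ | ⟨b, rfl⟩
    · exact Or.inl ⟨b, Multiset.cons_swap a b S⟩
    · exact Or.inr ⟨b, Multiset.cons_swap a b U⟩

lemma zero_left (S : Multiset α) : EditPath S.card 0 S := by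
  induction S using Multiset.induction_on with
  | empty => rfl
  | cons a S ih =>
    rw [Multiset.card_cons]
    exact ⟨{a}, Or.inl ⟨a, rfl⟩, ih.cons a⟩

lemma card_add_card (S S' : Multiset α) : EditPath (S.card + S'.card) S S' := by
  induction S using Multiset.induction_on with
  | empty => simpa using zero_left S'
  | cons a S ih =>
    rw [Multiset.card_cons, add_right_comm]
    exact ⟨S, Or.inr ⟨a, rfl⟩, ih⟩

variable [DecidableEq α]

lemma card_add_card_le : ∀ {n : ℕ} {S S' : Multiset α},
    EditPath n S S' → S.card + S'.card ≤ n + 2 * (S ∩ S').card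
  | 0, S, _, rfl => by rw [← Multiset.inf_eq_inter, inf_idem]; omega
  | _ + 1, S, S', ⟨T, hT, hp⟩ => by
    have ih := card_add_card_le hp
    rcases hT with ⟨a, rfl⟩ | ⟨a, rfl⟩
    · have : ((a ::ₘ S) ∩ S').card ≤ (S ∩ S').card + 1 := by
        by_cases ha : a ∈ S'
        · rw [Multiset.cons_inter_of_pos _ ha, Multiset.card_cons]
          gcongr
          exact Multiset.le_inter Multiset.inter_le_left
            (Multiset.inter_le_right.trans (Multiset.erase_le a S'))
        · rw [Multiset.cons_inter_of_neg _ ha]; omega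
      rw [Multiset.card_cons] at ih
      omega
    · have : (T ∩ S').card ≤ ((a ::ₘ T) ∩ S').card := Multiset.card_le_card <|
        Multiset.le_inter (Multiset.inter_le_left.trans (Multiset.le_cons_self T a))
          Multiset.inter_le_right
      rw [Multiset.card_cons]
      omega

end EditPath

lemma card_sub_add_card_sub_le_editDist {α : Type*} [DecidableEq α] (S S' : Multiset α) :
    (S - S').card + (S' - S).card ≤ editDist S S' := by
  have hpath : EditPath (editDist S S') S S' :=
    Nat.sInf_mem (s := {n | EditPath n S S'}) ⟨_, EditPath.card_add_card S S'⟩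
  have h := hpath.card_add_card_le
  have hS := congrArg Multiset.card (Multiset.sub_add_inter S S')
  have hS' := congrArg Multiset.card (Multiset.sub_add_inter S' S)
  rw [Multiset.inter_comm] at hS'
  simp only [Multiset.card_add] at hS hS'
  omega

def giniOfFrac (p : ℝ) : ℝ := 2 * p * (1 - p)

lemma giniOfFrac_mem_Icc {p : ℝ} (hp : p ∈ Set.Icc (0 : ℝ) 1) :
    giniOfFrac p ∈ Set.Icc (0 : ℝ) (1 / 2) := by
  obtain ⟨hp0, hp1⟩ := hp
  unfold giniOfFrac
  constructor <;> nlinarith [sq_nonneg (2 * p - 1)]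

lemma abs_giniOfFrac_sub_le {p q : ℝ} (hp : p ∈ Set.Icc (0 : ℝ) 1) (hq : q ∈ Set.Icc (0 : ℝ) 1) :
    |giniOfFrac p - giniOfFrac q| ≤ 2 * |p - q| := by
  obtain ⟨hp0, hp1⟩ := hp
  obtain ⟨hq0, hq1⟩ := hq
  have hfactor : giniOfFrac p - giniOfFrac q = 2 * (p - q) * (1 - (p + q)) := by
    unfold giniOfFrac; ring
  have hsum : |1 - (p + q)| ≤ 1 := abs_le.2 ⟨by linarith, by linarith⟩
  rw [hfactor, abs_mul, abs_mul, abs_two]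
  exact mul_le_of_le_one_right (by positivity) hsum

lemma abs_add_div_add_sub_div_le {a t c j : ℝ} (hj : 0 ≤ j) (hjt : j ≤ t) (hc : 0 ≤ c)
    (hca : c ≤ a) : |(c + j) / (a + t) - j / t| ≤ a / (a + t) := by
  rcases hj.trans hjt |>.eq_or_lt with rfl | ht
  · obtain rfl : j = 0 := le_antisymm hjt hj
    simpa [abs_of_nonneg (div_nonneg hc (hc.trans hca))] using
      div_le_div_of_nonneg_right hca (hc.trans hca)
  · have hat : 0 < a + t := by linarith
    rw [div_sub_div _ _ hat.ne' ht.ne', abs_div, abs_of_pos (mul_pos hat ht),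
      div_le_div_iff₀ (mul_pos hat ht) hat]
    have hnum : |(c + j) * t - (a + t) * j| ≤ a * t := abs_le.2
      ⟨by nlinarith [mul_le_mul_of_nonneg_right hjt (hc.trans hca)], by nlinarith⟩
    calc |(c + j) * t - (a + t) * j| * (a + t) ≤ a * t * (a + t) := by gcongr
      _ = a * ((a + t) * t) := by ring

lemma two_mul_div_add_two_mul_div_le {a b t : ℝ} (hb : 0 ≤ b) (hba : b ≤ a)
    (ht : 4 * a + 5 * b < t) :
    2 * (a / (a + t)) + 2 * (b / (b + t)) ≤ 5 / 2 * ((a + b) / (a + t)) := by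
  have hat : 0 < a + t := by linarith
  have hbt : 0 < b + t := by linarith
  rw [mul_div_assoc', mul_div_assoc', mul_div_assoc', div_add_div _ _ hat.ne' hbt.ne',
    div_le_div_iff₀ (mul_pos hat hbt) hat]
  nlinarith [mul_nonneg hb (sub_nonneg.2 hba), mul_nonneg hb hb,
    mul_le_mul_of_nonneg_left ht.le hb, mul_pos hat hbt]

lemma abs_giniOfFrac_sub_le_of_near {p q r a b t : ℝ} (hp : p ∈ Set.Icc (0 : ℝ) 1)
    (hq : q ∈ Set.Icc (0 : ℝ) 1) (hr : r ∈ Set.Icc (0 : ℝ) 1) (ht : 0 ≤ t) (hb : 0 ≤ b)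
    (hba : b ≤ a) (hpr : |p - r| ≤ a / (a + t)) (hqr : |q - r| ≤ b / (b + t)) :
    |giniOfFrac p - giniOfFrac q| ≤ 5 / 2 * ((a + b) / (a + t)) := by
  rcases le_or_gt t (4 * a + 5 * b) with hsmall | hlarge
  · rcases (add_nonneg (hb.trans hba) ht).eq_or_lt with hzero | hpos
    · obtain ⟨rfl, rfl⟩ : a = 0 ∧ t = 0 := ⟨by linarith, by linarith⟩
      obtain rfl : b = 0 := le_antisymm hba hb
      obtain rfl : p = r := by simpa [sub_eq_zero] using hpr
      obtain rfl : q = p := by simpa [sub_eq_zero] using hqr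
      simp
    · obtain ⟨hp0, hp1⟩ := giniOfFrac_mem_Icc hp
      obtain ⟨hq0, hq1⟩ := giniOfFrac_mem_Icc hq
      have hhalf : (1 : ℝ) / 2 ≤ 5 / 2 * ((a + b) / (a + t)) := by
        rw [mul_div_assoc', le_div_iff₀ hpos]; linarith
      exact (abs_sub_le_iff.2 ⟨by linarith, by linarith⟩).trans hhalf
  · calc |giniOfFrac p - giniOfFrac q|
        ≤ |giniOfFrac p - giniOfFrac r| + |giniOfFrac r - giniOfFrac q| := abs_sub_le _ _ _
      _ ≤ 2 * |p - r| + 2 * |q - r| := by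
        rw [abs_sub_comm q r]
        exact add_le_add (abs_giniOfFrac_sub_le hp hr) (abs_giniOfFrac_sub_le hr hq)
      _ ≤ 2 * (a / (a + t)) + 2 * (b / (b + t)) := by gcongr
      _ ≤ 5 / 2 * ((a + b) / (a + t)) := two_mul_div_add_two_mul_div_le hb hba hlarge

section Multiset

variable {α : Type*}

noncomputable def posFrac (S : Multiset (α × Bool)) : ℝ :=
  ((S.filter fun e => e.2 = true).card : ℝ) / S.card

lemma gini_eq_giniOfFrac_posFrac (S : Multiset (α × Bool)) : gini S = giniOfFrac (posFrac S) := by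
  rcases eq_or_ne S 0 with rfl | hS
  · simp [gini, giniOfFrac, posFrac]
  · simp only [gini, if_neg hS, giniOfFrac, posFrac]

lemma posFrac_mem_Icc (S : Multiset (α × Bool)) : posFrac S ∈ Set.Icc (0 : ℝ) 1 :=
  ⟨by unfold posFrac; positivity,
    div_le_one_of_le₀ (by exact_mod_cast Multiset.card_le_card (Multiset.filter_le _ S))
      (Nat.cast_nonneg _)⟩

lemma abs_posFrac_sub_le_of_le [DecidableEq α] {S T : Multiset (α × Bool)} (hTS : T ≤ S) :
    |posFrac S - posFrac T| ≤ (S - T).card / S.card := by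
  have hsplit : S = (S - T) + T := (tsub_add_cancel_of_le hTS).symm
  have hcard : (S.card : ℝ) = (S - T).card + T.card := by
    conv_lhs => rw [hsplit]
    rw [Multiset.card_add, Nat.cast_add]
  have hpos : ((S.filter fun e => e.2 = true).card : ℝ) =
      ((S - T).filter fun e => e.2 = true).card + (T.filter fun e => e.2 = true).card := by
    conv_lhs => rw [hsplit]
    rw [Multiset.filter_add, Multiset.card_add, Nat.cast_add]
  rw [posFrac, posFrac, hcard, hpos]
  exact abs_add_div_add_sub_div_le (Nat.cast_nonneg _)
    (by exact_mod_cast Multiset.card_le_card (Multiset.filter_le _ T)) (Nat.cast_nonneg _)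
    (by exact_mod_cast Multiset.card_le_card (Multiset.filter_le _ (S - T)))

lemma abs_gini_sub_le [DecidableEq α] (S S' : Multiset (α × Bool)) :
    |gini S - gini S'| ≤
      5 / 2 * (((S - S').card + (S' - S).card : ℝ) / max (S.card : ℝ) S'.card) := by
  wlog hle : S'.card ≤ S.card generalizing S S'
  · rw [abs_sub_comm, max_comm, add_comm]
    exact this S' S (le_of_not_ge hle)
  have hS : (S.card : ℝ) = (S - S').card + (S ∩ S').card := by
    rw [← Nat.cast_add, ← Multiset.card_add, Multiset.sub_add_inter]
  have hS' : (S'.card : ℝ) = (S' - S).card + (S ∩ S').card := by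
    rw [← Nat.cast_add, ← Multiset.card_add, Multiset.inter_comm, Multiset.sub_add_inter]
  have hle' : (S'.card : ℝ) ≤ S.card := by exact_mod_cast hle
  have hp := abs_posFrac_sub_le_of_le (Multiset.inter_le_left (s := S) (t := S'))
  have hq := abs_posFrac_sub_le_of_le (Multiset.inter_le_right (s := S) (t := S'))
  rw [Multiset.sub_inter] at hp
  rw [Multiset.inter_comm, Multiset.sub_inter, Multiset.inter_comm] at hq
  rw [gini_eq_giniOfFrac_posFrac, gini_eq_giniOfFrac_posFrac, max_eq_left hle', hS]
  rw [hS] at hp hle'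
  rw [hS'] at hq hle'
  exact abs_giniOfFrac_sub_le_of_near (posFrac_mem_Icc S) (posFrac_mem_Icc S')
    (posFrac_mem_Icc _) (Nat.cast_nonneg _) (Nat.cast_nonneg _) (by linarith) hp hq

end Multiset

/-- |g(S) − g(S')| ≤ 2.5 · Δ*(S,S') where Δ*(S,S') = Δ(S,S')/max(|S|,|S'|)
is the relative edit distance. -/
theorem gini_smooth_rel_edit {α : Type*} (S S' : Multiset (α × Bool)) :
    |gini S - gini S'| ≤ 2.5 * ((editDist S S' : ℝ) / (max S.card S'.card : ℝ)) := by
  classical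
  have hedit : ((S - S').card + (S' - S).card : ℝ) ≤ editDist S S' := by
    exact_mod_cast card_sub_add_card_sub_le_editDist S S'
  calc |gini S - gini S'|
      ≤ 5 / 2 * (((S - S').card + (S' - S).card : ℝ) / max (S.card : ℝ) S'.card) :=
        abs_gini_sub_le S S'
    _ ≤ 2.5 * ((editDist S S' : ℝ) / (max S.card S'.card : ℝ)) := by
        norm_num only
        gcongr
end

section
/- Let S and S' be finite multisets of examples in ℝ^d × {0,1} with edit distance Δ(S,S') ≤ 1. Then for every feature j and threshold t, the Gini gains satisfy |G(S,j,t) − G(S',j,t)| ≤ 12 / max(|S|, |S'|). -/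
open Classical in
/-- The Gini gain of the split (j, t) on the multiset S of examples in ℝ^d × {0,1}:
G(S,j,t) = g(S) − (|S₋|/|S|) g(S₋) − (|S₊|/|S|) g(S₊) where S₋ = S[x_j ≤ t] and
S₊ = S[x_j > t]; by convention G(∅,j,t) = 0. -/
noncomputable def giniGain {d : ℕ} (S : Multiset ((Fin d → ℝ) × Bool)) (j : Fin d) (t : ℝ) : ℝ :=
  if S = 0 then 0 else
    gini S
      - (((S.filter fun e : (Fin d → ℝ) × Bool => e.1 j ≤ t).card : ℝ) / S.card) * gini (S.filter fun e : (Fin d → ℝ) × Bool => e.1 j ≤ t)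
      - (((S.filter fun e : (Fin d → ℝ) × Bool => t < e.1 j).card : ℝ) / S.card) * gini (S.filter fun e : (Fin d → ℝ) × Bool => t < e.1 j)

/-! For a multiset `T` with `k` positive and `l` negative labels, `|T| g(T) = 2kl/(k+l)`. This
quantity lies in `[0, |T|/2]`, and adding one example raises it by between `0` and `2`
(the increment is `2l²/((k+l)(k+l+1))` when a positive example is added). Hence the numerator `N`
of `G(S) = N(S)/|S|` satisfies `|N(S)| ≤ |S|/2` and moves by at most `2` under an insertion, so
`|G(a :: S) - G(S)| ≤ (5/2)/(|S|+1)`. -/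

noncomputable def giniImpurity (k l : ℝ) : ℝ := 2 * k * l / (k + l)

section giniImpurity

variable {k l : ℝ}

theorem giniImpurity_comm (k l : ℝ) : giniImpurity k l = giniImpurity l k := by
  unfold giniImpurity; ring

theorem giniImpurity_nonneg (hk : 0 ≤ k) (hl : 0 ≤ l) : 0 ≤ giniImpurity k l := by
  unfold giniImpurity; positivity

theorem giniImpurity_le_half (hk : 0 ≤ k) (hl : 0 ≤ l) : giniImpurity k l ≤ (k + l) / 2 := by
  rcases (add_nonneg hk hl).eq_or_lt with h | h
  · simp [giniImpurity, ← h]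
  · rw [giniImpurity, div_le_div_iff₀ h two_pos]
    nlinarith [sq_nonneg (k - l)]

theorem giniImpurity_add_one_sub (hk : 0 ≤ k) (hl : 0 ≤ l) :
    giniImpurity (k + 1) l - giniImpurity k l = 2 * l ^ 2 / ((k + l) * (k + l + 1)) := by
  rcases (add_nonneg hk hl).eq_or_lt with h | h
  · obtain ⟨rfl, rfl⟩ : k = 0 ∧ l = 0 := ⟨by linarith, by linarith⟩
    simp [giniImpurity]
  · unfold giniImpurity
    field_simp
    ring

theorem giniImpurity_le_add_one (hk : 0 ≤ k) (hl : 0 ≤ l) :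
    giniImpurity k l ≤ giniImpurity (k + 1) l := by
  have := giniImpurity_add_one_sub hk hl
  have : 0 ≤ 2 * l ^ 2 / ((k + l) * (k + l + 1)) := by positivity
  linarith

theorem giniImpurity_add_one_le (hk : 0 ≤ k) (hl : 0 ≤ l) :
    giniImpurity (k + 1) l ≤ giniImpurity k l + 2 := by
  suffices 2 * l ^ 2 / ((k + l) * (k + l + 1)) ≤ 2 by
    linarith [giniImpurity_add_one_sub hk hl]
  rcases (add_nonneg hk hl).eq_or_lt with h | h
  · simp [← h]
  · rw [div_le_iff₀ (by positivity)]
    nlinarith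

end giniImpurity

theorem Multiset.card_filter_add_card_filter_not {β : Type*} (p : β → Prop) [DecidablePred p]
    (s : Multiset β) : (s.filter p).card + (s.filter fun b => ¬p b).card = s.card := by
  rw [← Multiset.card_add, Multiset.filter_add_not]

section Multiset

open Classical

variable {α : Type*}

theorem card_mul_gini (T : Multiset (α × Bool)) :
    (T.card : ℝ) * gini T =
      giniImpurity (T.filter fun e => e.2 = true).card (T.filter fun e => ¬e.2 = true).card := by
  have hcard : ((T.filter fun e => e.2 = true).card : ℝ) + (T.filter fun e => ¬e.2 = true).card
      = T.card := by exact_mod_cast Multiset.card_filter_add_card_filter_not _ T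
  by_cases hT : T = 0
  · simp [hT, gini, giniImpurity]
  have hpos : (0 : ℝ) < T.card := by exact_mod_cast Multiset.card_pos.mpr hT
  rw [gini, if_neg hT, giniImpurity, ← hcard]
  rw [← hcard] at hpos
  field_simp
  ring

theorem card_mul_gini_nonneg (T : Multiset (α × Bool)) : 0 ≤ (T.card : ℝ) * gini T := by
  rw [card_mul_gini]
  exact giniImpurity_nonneg (Nat.cast_nonneg _) (Nat.cast_nonneg _)

theorem card_mul_gini_le_half (T : Multiset (α × Bool)) :
    (T.card : ℝ) * gini T ≤ T.card / 2 := by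
  rw [card_mul_gini, ← Multiset.card_filter_add_card_filter_not (fun e => e.2 = true) T,
    Nat.cast_add]
  exact giniImpurity_le_half (Nat.cast_nonneg _) (Nat.cast_nonneg _)

theorem card_mul_gini_le_cons (T : Multiset (α × Bool)) (a : α × Bool) :
    (T.card : ℝ) * gini T ≤ ((a ::ₘ T).card : ℝ) * gini (a ::ₘ T) ∧
      ((a ::ₘ T).card : ℝ) * gini (a ::ₘ T) ≤ T.card * gini T + 2 := by
  rw [card_mul_gini, card_mul_gini]
  obtain ⟨x, _ | _⟩ := a
  · simp only [Bool.not_eq_true, Bool.false_eq_true, not_false_eq_true,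
      Multiset.filter_cons_of_neg, Multiset.filter_cons_of_pos, Multiset.card_cons, Nat.cast_add,
      Nat.cast_one]
    rw [giniImpurity_comm, giniImpurity_comm _ (_ + 1)]
    exact ⟨giniImpurity_le_add_one (Nat.cast_nonneg _) (Nat.cast_nonneg _),
      giniImpurity_add_one_le (Nat.cast_nonneg _) (Nat.cast_nonneg _)⟩
  · simp only [Bool.not_eq_true, Multiset.filter_cons_of_pos, Multiset.card_cons, Nat.cast_add,
      Nat.cast_one, Bool.true_eq_false, not_false_eq_true, Multiset.filter_cons_of_neg]
    exact ⟨giniImpurity_le_add_one (Nat.cast_nonneg _) (Nat.cast_nonneg _),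
      giniImpurity_add_one_le (Nat.cast_nonneg _) (Nat.cast_nonneg _)⟩

section split

variable (p : α × Bool → Prop) [DecidablePred p]

noncomputable def unnormalizedGiniGain (S : Multiset (α × Bool)) : ℝ :=
  S.card * gini S - (S.filter p).card * gini (S.filter p)
    - (S.filter fun e => ¬p e).card * gini (S.filter fun e => ¬p e)

theorem abs_unnormalizedGiniGain_le (S : Multiset (α × Bool)) :
    |unnormalizedGiniGain p S| ≤ S.card / 2 := by
  have hcard : ((S.filter p).card : ℝ) + (S.filter fun e => ¬p e).card = S.card := by
    exact_mod_cast Multiset.card_filter_add_card_filter_not p S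
  rw [unnormalizedGiniGain, abs_le]
  constructor <;>
    linarith [card_mul_gini_le_half S, card_mul_gini_nonneg S,
      card_mul_gini_le_half (S.filter p), card_mul_gini_nonneg (S.filter p),
      card_mul_gini_le_half (S.filter fun e => ¬p e),
      card_mul_gini_nonneg (S.filter fun e => ¬p e)]

theorem abs_unnormalizedGiniGain_cons_sub_le (S : Multiset (α × Bool)) (a : α × Bool) :
    |unnormalizedGiniGain p (a ::ₘ S) - unnormalizedGiniGain p S| ≤ 2 := by
  have hS := card_mul_gini_le_cons S a
  rw [unnormalizedGiniGain, unnormalizedGiniGain, abs_le]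
  by_cases ha : p a
  · have hp := card_mul_gini_le_cons (S.filter p) a
    rw [Multiset.filter_cons_of_pos _ ha,
      Multiset.filter_cons_of_neg (p := fun e => ¬p e) _ (not_not_intro ha)]
    constructor <;> linarith
  · have hnp := card_mul_gini_le_cons (S.filter fun e => ¬p e) a
    rw [Multiset.filter_cons_of_neg _ ha, Multiset.filter_cons_of_pos (p := fun e => ¬p e) _ ha]
    constructor <;> linarith

end split

end Multiset

theorem abs_div_add_one_sub_div_le {x y n a b : ℝ} (hn : 0 ≤ n) (ha : 0 ≤ a)
    (hx : |x| ≤ a * n) (hxy : |y - x| ≤ b) : |y / (n + 1) - x / n| ≤ (a + b) / (n + 1) := by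
  rcases hn.eq_or_lt with rfl | hn
  · obtain rfl : x = 0 := (abs_nonpos_iff (a := x)).mp (by simpa using hx)
    simpa using hxy.trans (le_add_of_nonneg_left ha : b ≤ a + b)
  have hxn : |x| / n ≤ a := (div_le_iff₀ hn).mpr hx
  calc |y / (n + 1) - x / n| = |(y - x) / (n + 1) - x / n / (n + 1)| := by
        congr 1; field_simp; ring
    _ ≤ |y - x| / (n + 1) + |x| / n / (n + 1) := by
        have hn1 : 0 < n + 1 := by linarith
        simpa only [abs_div, abs_of_pos hn, abs_of_pos hn1]
          using abs_sub ((y - x) / (n + 1)) (x / n / (n + 1))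
    _ ≤ b / (n + 1) + a / (n + 1) := by gcongr
    _ = (a + b) / (n + 1) := by ring

section EditPath

variable {α : Type*}

theorem editPath_card_add (T U : Multiset α) : EditPath U.card T (T + U) := by
  induction U using Multiset.induction_on generalizing T with
  | empty => exact (add_zero T).symm
  | cons a U ih =>
    rw [Multiset.card_cons, Multiset.add_cons, ← Multiset.cons_add]
    exact ⟨a ::ₘ T, Or.inl ⟨a, rfl⟩, ih _⟩

theorem editPath_card_add_card (S U : Multiset α) : EditPath (S.card + U.card) S U := by
  suffices ∀ T, EditPath (S.card + U.card) (S + T) (T + U) by simpa using this 0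
  intro T
  induction S using Multiset.induction_on with
  | empty => simpa using editPath_card_add T U
  | cons a S ih =>
    rw [Multiset.card_cons, add_right_comm, Multiset.cons_add]
    exact ⟨S + T, Or.inr ⟨a, rfl⟩, ih⟩

theorem eq_or_exists_cons_of_editDist_le_one {S S' : Multiset α} (h : editDist S S' ≤ 1) :
    S = S' ∨ ∃ a, S' = a ::ₘ S ∨ S = a ::ₘ S' := by
  have hpath : EditPath (editDist S S') S S' :=
    Nat.sInf_mem (s := {n | EditPath n S S'}) ⟨_, editPath_card_add_card S S'⟩
  rcases Nat.le_one_iff_eq_zero_or_eq_one.mp h with h0 | h1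
  · rw [h0] at hpath
    exact Or.inl hpath
  · rw [h1] at hpath
    obtain ⟨T, (⟨a, rfl⟩ | ⟨a, rfl⟩), rfl⟩ := hpath
    exacts [Or.inr ⟨a, Or.inl rfl⟩, Or.inr ⟨a, Or.inr rfl⟩]

end EditPath

section giniGain

open Classical

variable {d : ℕ}

theorem giniGain_eq_div (S : Multiset ((Fin d → ℝ) × Bool)) (j : Fin d) (t : ℝ) :
    giniGain S j t =
      unnormalizedGiniGain (fun e : (Fin d → ℝ) × Bool => e.1 j ≤ t) S / S.card := by
  by_cases hS : S = 0
  · simp [giniGain, hS]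
  have hpos : (0 : ℝ) < S.card := by exact_mod_cast Multiset.card_pos.mpr hS
  have hsplit : (S.filter fun e => t < e.1 j) = S.filter fun e => ¬e.1 j ≤ t :=
    Multiset.filter_congr fun _ _ => not_le.symm
  rw [giniGain, if_neg hS, unnormalizedGiniGain, hsplit]
  field_simp

theorem abs_giniGain_cons_sub_le (S : Multiset ((Fin d → ℝ) × Bool))
    (a : (Fin d → ℝ) × Bool) (j : Fin d) (t : ℝ) :
    |giniGain (a ::ₘ S) j t - giniGain S j t| ≤ 5 / 2 / (a ::ₘ S).card := by
  rw [giniGain_eq_div, giniGain_eq_div, Multiset.card_cons, Nat.cast_succ]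
  refine (abs_div_add_one_sub_div_le (a := 1 / 2) (Nat.cast_nonneg _) (by norm_num) ?_
    (abs_unnormalizedGiniGain_cons_sub_le _ S a)).trans_eq (by norm_num)
  linarith [abs_unnormalizedGiniGain_le (fun e : (Fin d → ℝ) × Bool => e.1 j ≤ t) S]

end giniGain

/-- if Δ(S,S') ≤ 1 then |G(S,j,t) − G(S',j,t)| ≤ 12 / max(|S|,|S'|). -/
theorem giniGain_smooth_one_edit {d : ℕ} (S S' : Multiset ((Fin d → ℝ) × Bool))
    (h : editDist S S' ≤ 1) (j : Fin d) (t : ℝ) :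
    |giniGain S j t - giniGain S' j t| ≤ 12 / (max S.card S'.card : ℝ) := by
  have weaken : ∀ n : ℕ, 5 / 2 / (n : ℝ) ≤ 12 / n := fun n => by gcongr; norm_num
  rcases eq_or_exists_cons_of_editDist_le_one h with rfl | ⟨a, rfl | rfl⟩
  · simp only [sub_self, abs_zero]
    positivity
  · rw [abs_sub_comm,
      max_eq_right (by exact_mod_cast Multiset.card_le_card (Multiset.le_cons_self S a))]
    exact (abs_giniGain_cons_sub_le S a j t).trans (weaken _)
  · rw [max_eq_left (by exact_mod_cast Multiset.card_le_card (Multiset.le_cons_self S' a))]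
    exact (abs_giniGain_cons_sub_le S' a j t).trans (weaken _)
end

section
/- Let S be a nonempty multiset of binary-labeled examples, partitioned by a split into S_u and S_z with |S_u| ≤ |S_z|, and set ν = |S_u|/|S|. If the Gini gain of the split is at least γ > 0, then ν > γ/4; i.e., min(|S_u|, |S_z|) > (γ/4)·|S|. -/
/-!
Writing `ν = |S_u|/|S|` and `r`, `q` for the fractions of `true` labels in `S_u`, `S_z`, the label
fraction of `S` is `ν r + (1 - ν) q`, and the Gini gain simplifies to `2 ν (1 - ν) (r - q)²`.
Hence the gain is at most `2 ν`, so a gain `γ > 0` forces `ν ≥ γ / 2 > γ / 4`.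
-/

namespace Gini

variable {α : Type*}

noncomputable def labelFrac (S : Multiset (α × Bool)) : ℝ :=
  ((S.filter fun e => e.2 = true).card : ℝ) / S.card

noncomputable def giniGain (Su Sz : Multiset (α × Bool)) : ℝ :=
  gini (Su + Sz) - ((Su.card : ℝ) / (Su + Sz).card) * gini Su
    - ((Sz.card : ℝ) / (Su + Sz).card) * gini Sz

theorem gini_of_ne_zero {S : Multiset (α × Bool)} (hS : S ≠ 0) :
    gini S = 2 * labelFrac S * (1 - labelFrac S) := by
  rw [gini, if_neg hS, labelFrac]

theorem labelFrac_nonneg (S : Multiset (α × Bool)) : 0 ≤ labelFrac S := by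
  unfold labelFrac; positivity

theorem labelFrac_le_one (S : Multiset (α × Bool)) : labelFrac S ≤ 1 :=
  div_le_one_of_le₀ (by exact_mod_cast Multiset.card_le_card (Multiset.filter_le _ _))
    (Nat.cast_nonneg _)

theorem card_mul_labelFrac (S : Multiset (α × Bool)) :
    S.card * labelFrac S = (S.filter fun e => e.2 = true).card := by
  rcases eq_or_ne S 0 with rfl | hS
  · simp
  · exact mul_div_cancel₀ _ (by simpa using hS)

theorem card_mul_labelFrac_add (S T : Multiset (α × Bool)) :
    (S + T).card * labelFrac (S + T) = S.card * labelFrac S + T.card * labelFrac T := by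
  rw [card_mul_labelFrac, card_mul_labelFrac, card_mul_labelFrac, Multiset.filter_add,
    Multiset.card_add, Nat.cast_add]

theorem binary_gini_gain_eq {a b r q : ℝ} (hab : a + b ≠ 0) :
    let p := (a * r + b * q) / (a + b)
    2 * p * (1 - p) - a / (a + b) * (2 * r * (1 - r)) - b / (a + b) * (2 * q * (1 - q))
      = 2 * (a / (a + b)) * (b / (a + b)) * (r - q) ^ 2 := by
  intro p
  simp only [p]
  field_simp
  ring

theorem giniGain_eq {Su Sz : Multiset (α × Bool)} (hu : Su ≠ 0) (hz : Sz ≠ 0) :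
    giniGain Su Sz = 2 * (Su.card / (Su + Sz).card) * (Sz.card / (Su + Sz).card)
      * (labelFrac Su - labelFrac Sz) ^ 2 := by
  have ha : (0 : ℝ) < Su.card := by exact_mod_cast Multiset.card_pos.2 hu
  have hb : (0 : ℝ) < Sz.card := by exact_mod_cast Multiset.card_pos.2 hz
  have hcard : ((Su + Sz).card : ℝ) = Su.card + Sz.card := by push_cast [Multiset.card_add]; rfl
  have hfrac : labelFrac (Su + Sz)
      = (Su.card * labelFrac Su + Sz.card * labelFrac Sz) / (Su.card + Sz.card) := by
    rw [← card_mul_labelFrac_add, hcard, mul_div_cancel_left₀ _ (by positivity)]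
  rw [giniGain, gini_of_ne_zero (by simp [hu]), gini_of_ne_zero hu, gini_of_ne_zero hz, hfrac,
    hcard]
  exact binary_gini_gain_eq (by positivity)

theorem giniGain_le (Su Sz : Multiset (α × Bool)) :
    giniGain Su Sz ≤ 2 * (Su.card / (Su + Sz).card) * (Sz.card / (Su + Sz).card) := by
  rcases eq_or_ne Su 0 with rfl | hu
  · rcases eq_or_ne Sz 0 with rfl | hz
    · simp [giniGain, gini]
    · simp [giniGain, hz]
  rcases eq_or_ne Sz 0 with rfl | hz
  · simp [giniGain, hu]
  rw [giniGain_eq hu hz]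
  have hsq : (labelFrac Su - labelFrac Sz) ^ 2 ≤ 1 := by
    rw [sq_le_one_iff_abs_le_one, abs_le]
    constructor <;> linarith [labelFrac_nonneg Su, labelFrac_le_one Su,
      labelFrac_nonneg Sz, labelFrac_le_one Sz]
  exact mul_le_of_le_one_right (by positivity) hsq

end Gini

open Gini in
theorem balanced_split_of_gain_general {α : Type*} (Su Sz : Multiset (α × Bool)) (γ : ℝ)
    (hle : Su.card ≤ Sz.card) (hγ : 0 < γ)
    (hgain : γ ≤ gini (Su + Sz)
        - ((Su.card : ℝ) / (Su + Sz).card) * gini Su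
        - ((Sz.card : ℝ) / (Su + Sz).card) * gini Sz) :
    γ / 4 < (Su.card : ℝ) / (Su + Sz).card ∧
      (γ / 4) * ((Su + Sz).card : ℝ) < (min Su.card Sz.card : ℕ) := by
  set ν : ℝ := (Su.card : ℝ) / (Su + Sz).card
  have hz : (Sz.card : ℝ) / (Su + Sz).card ≤ 1 :=
    div_le_one_of_le₀ (by exact_mod_cast Multiset.card_le_card (Multiset.le_add_left _ _))
      (Nat.cast_nonneg _)
  have hγν : γ ≤ 2 * ν :=
    calc γ ≤ giniGain Su Sz := hgain
      _ ≤ 2 * ν * (Sz.card / (Su + Sz).card) := giniGain_le Su Sz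
      _ ≤ 2 * ν := mul_le_of_le_one_right (by positivity) hz
  have hν : γ / 4 < ν := by linarith
  refine ⟨hν, ?_⟩
  have hS : (0 : ℝ) < (Su + Sz).card := by
    by_contra h
    simp only [ν, le_antisymm (not_lt.1 h) (Nat.cast_nonneg _), div_zero] at hν
    linarith
  rw [min_eq_left hle]
  calc γ / 4 * (Su + Sz).card < ν * (Su + Sz).card := mul_lt_mul_of_pos_right hν hS
    _ = Su.card := div_mul_cancel₀ _ hS.ne'

/-- if a split partitions a nonempty S into S_u, S_z with |S_u| ≤ |S_z|
and has Gini gain at least γ > 0, then ν = |S_u|/|S| > γ/4, i.e.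
min(|S_u|,|S_z|) > (γ/4)·|S|. -/
theorem balanced_split_of_gain {α : Type*} (Su Sz : Multiset (α × Bool)) (γ : ℝ)
    (hne : Su + Sz ≠ 0) (hle : Su.card ≤ Sz.card) (hγ : 0 < γ)
    (hgain : γ ≤ gini (Su + Sz)
        - ((Su.card : ℝ) / (Su + Sz).card) * gini Su
        - ((Sz.card : ℝ) / (Su + Sz).card) * gini Sz) :
    γ / 4 < (Su.card : ℝ) / (Su + Sz).card ∧
      (γ / 4) * ((Su + Sz).card : ℝ) < (min Su.card Sz.card : ℕ) :=
  balanced_split_of_gain_general Su Sz γ hle hγ hgain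
end
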